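/- arXiv:math/0403320 — 3 statements merged into one kernel-verified Lean document; each statement's English description precedes it below -/
import Mathlib

section
/- Let q ≥ 2 and let Γ = ℤ_q ≀ ℤ. Define Φ : Γ → DL(q,q) by Φ(η,k) = x₁x₂, where x₁ = (η_k⁻, k) ∈ T_q with η_k⁻(n) = η(k+n) for n ≤ 0 and η_k⁻(n) = 0 for n > 0, and x₂ = (η_k⁺, −k) ∈ T_q with η_k⁺(n) = η(k+1−n) for n ≤ 0 and η_k⁺(n) = 0 for n > 0. Then Φ is a bijection, and for all g, h ∈ Γ, the vertices Φ(g) and Φ(h) are adjacent in DL(q,q) if and only if h = g·s for some s in the symmetric generating set {(δ₁^ℓ, 1) : ℓ ∈ ZMod q} ∪ {(δ₀^ℓ, −1) : ℓ ∈ ZMod q}; that is, Φ is an isomorphism from the right Cayley graph of Γ with respect to this generating set onto DL(q,q). -/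
open scoped Classical

noncomputable section

namespace LampDL

variable {X : Type*}

/-- `n`-step transition probabilities of the Markov chain with transition matrix `p`. -/
def matpow (p : X → X → ℝ) : ℕ → X → X → ℝ
  | 0 => fun x y => if x = y then 1 else 0
  | n + 1 => fun x y => ∑' z, p x z * matpow p n z y

/-- A (countable) stochastic transition matrix. -/
def IsStochastic (p : X → X → ℝ) : Prop :=
  (∀ x y, 0 ≤ p x y) ∧ ∀ x, HasSum (p x) 1

/-- Irreducibility: some power has positive entry for every pair. -/
def IsIrreducible (p : X → X → ℝ) : Prop := ∀ x y, ∃ n, 0 < matpow p n x y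

/-- `hitBefore p A y n x` is the probability that the chain started at `x` avoids `A`
at all times `< n` and is at `y` at time `n`.  For `y ∈ A`, summing over `n` yields
`F^A(x,y) = Pr_x[s^y ≤ s^A, s^y < ∞]`. -/
def hitBefore (p : X → X → ℝ) (A : Set X) (y : X) : ℕ → X → ℝ
  | 0 => fun x => if x = y then 1 else 0
  | n + 1 => fun x => if x ∈ A then 0 else ∑' z, p x z * hitBefore p A y n z

/-- `F^A(x,y) = Pr_x[s^y ≤ s^A, s^y < ∞]` (for `y ∈ A`). -/
def FA (p : X → X → ℝ) (A : Set X) (x y : X) : ℝ := ∑' n, hitBefore p A y n x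

/-- `F(x,y) = Pr_x[s^y < ∞]`, the probability of ever hitting `y` from `x`. -/
def Fhit (p : X → X → ℝ) (x y : X) : ℝ := FA p {y} x y

/-- A function is `P`-harmonic if `∑_y p(x,y) h(y) = h(x)` for every `x`. -/
def IsHarmonic (p : X → X → ℝ) (h : X → ℝ) : Prop := ∀ x, ∑' y, p x y * h y = h x

/-- A minimal harmonic function (w.r.t. the reference point `o`). -/
def IsMinimalHarmonic (p : X → X → ℝ) (o : X) (h : X → ℝ) : Prop :=
  IsHarmonic p h ∧ (∀ x, 0 ≤ h x) ∧ h o = 1 ∧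
    ∀ h₁ : X → ℝ, IsHarmonic p h₁ → (∀ x, 0 ≤ h₁ x) → (∀ x, h₁ x ≤ h x) →
      ∃ c : ℝ, ∀ x, h₁ x = c * h x

/-- Vertices of the homogeneous tree `T_q`, modelled as pairs `(σ, k)` where
`σ : ℤ → ZMod q` is finitely supported with `σ n = 0` for `n > 0`. -/
structure TV (q : ℕ) where
  σ : ℤ → ZMod q
  k : ℤ
  fin : (Function.support σ).Finite
  upz : ∀ n : ℤ, 0 < n → σ n = 0

lemma fin_aux {q : ℕ} (g : ℤ → ZMod q) (hg : (Function.support g).Finite)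
    (f : ℤ → ℤ) (hf : Function.Injective f) :
    (Function.support fun n => if n ≤ 0 then g (f n) else 0).Finite := by
  refine Set.Finite.subset (hg.preimage hf.injOn) ?_
  intro n hn
  simp only [Function.mem_support] at hn
  by_cases hle : n ≤ 0
  · simp only [hle, if_true] at hn
    simpa [Set.mem_preimage, Function.mem_support] using hn
  · simp [hle] at hn

/-- The predecessor `x⁻` of a vertex of `T_q` (w.r.t. the reference end `ω`). -/
def pred {q : ℕ} (x : TV q) : TV q where
  σ := fun n => if n ≤ 0 then x.σ (n - 1) else 0
  k := x.k - 1
  fin := fin_aux x.σ x.fin (fun n => n - 1) sub_left_injective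
  upz := fun n hn => by simp [not_le.mpr hn]

/-- The vertex on the geodesic `ω o` at Busemann level `k` (zero configuration). -/
def rootAt (q : ℕ) (k : ℤ) : TV q := ⟨fun _ => 0, k, by simp, fun _ _ => rfl⟩

/-- The Diestel–Leader graph `DL(q,r)`. -/
def DL (q r : ℕ) := {x : TV q × TV r // x.1.k + x.2.k = 0}

/-- The root `o = o₁o₂` of `DL(q,r)`. -/
def oDL (q r : ℕ) : DL q r := ⟨(rootAt q 0, rootAt r 0), by simp [rootAt]⟩

/-- The projected transition matrix `P₁ = P_{1,α}` on `T_q`. -/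
def p1 (q : ℕ) (α : ℝ) (x y : TV q) : ℝ :=
  if pred y = x then α / (q : ℝ) else if y = pred x then 1 - α else 0

/-- The projected transition matrix `P₂ = P_{2,1-α}` on `T_r`. -/
def p2 (r : ℕ) (α : ℝ) (x y : TV r) : ℝ :=
  if y = pred x then α else if pred y = x then (1 - α) / (r : ℝ) else 0

/-- The transition matrix `P_α` on `DL(q,r)`. -/
def pDL (q r : ℕ) (α : ℝ) (x y : DL q r) : ℝ :=
  if pred y.val.1 = x.val.1 ∧ y.val.2 = pred x.val.2 then α / (q : ℝ)
  else if y.val.1 = pred x.val.1 ∧ pred y.val.2 = x.val.2 then (1 - α) / (r : ℝ)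
  else 0


/-- Ends `ξ ∈ ∂*T_q`: configurations whose support is bounded below. -/
def BoundedBelowSupp (q : ℕ) (ξ : ℤ → ZMod q) : Prop := ∃ N : ℤ, ∀ n < N, ξ n = 0

/-- Configurations whose support is bounded above. -/
def BoundedAboveSupp (q : ℕ) (ξ : ℤ → ZMod q) : Prop := ∃ N : ℤ, ∀ n > N, ξ n = 0

/-- The confluent level `b(x,ξ)` (level of `x ⋏ ξ` w.r.t. `ω`) of a vertex `x ∈ T_q`
and an end `ξ ∈ ∂*T_q`. -/
def bconf (q : ℕ) (x : TV q) (ξ : ℤ → ZMod q) : ℤ :=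
  sInf ({m : ℤ | m ≤ x.k ∧ ξ (m + 1) ≠ x.σ (m + 1 - x.k)} ∪ {x.k})

/-- `F₁⁻ = F₁(x,x⁻) = min {1, (1-α)/α}`. -/
def F1m (α : ℝ) : ℝ := min 1 ((1 - α) / α)
/-- `F₁⁺ = F₁(x⁻,x) = min {1/q, α/((1-α)q)}`. -/
def F1p (q : ℕ) (α : ℝ) : ℝ := min (1 / (q : ℝ)) (α / ((1 - α) * (q : ℝ)))
/-- `F₂⁻ = min {1, α/(1-α)}`. -/
def F2m (α : ℝ) : ℝ := min 1 (α / (1 - α))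
/-- `F₂⁺ = min {1/r, (1-α)/(αr)}`. -/
def F2p (r : ℕ) (α : ℝ) : ℝ := min (1 / (r : ℝ)) ((1 - α) / (α * (r : ℝ)))

/-- The Martin kernel `K₁(·,ξ₁)` on `T_q`, `ξ₁ ∈ ∂*T_q`. -/
def K1 (q : ℕ) (α : ℝ) (x : TV q) (ξ : ℤ → ZMod q) : ℝ :=
  F1m α ^ x.k * (F1m α * F1p q α) ^ (bconf q (rootAt q 0) ξ - bconf q x ξ)

/-- The Martin kernel `K₂(·,ξ₂)` on `T_r`, `ξ₂ ∈ ∂*T_r`. -/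
def K2 (r : ℕ) (α : ℝ) (x : TV r) (ξ : ℤ → ZMod r) : ℝ :=
  F2m α ^ x.k * (F2m α * F2p r α) ^ (bconf r (rootAt r 0) ξ - bconf r x ξ)

/-- The vertex `u_m = (σ_m, m)` on the geodesic from `ω` to the end encoded by `ξ`. -/
def rayVertex (q : ℕ) (ξ : ℤ → ZMod q) (hξ : BoundedBelowSupp q ξ) (m : ℤ) : TV q where
  σ := fun n => if n ≤ 0 then ξ (m + n) else 0
  k := m
  fin := by
    obtain ⟨N, hN⟩ := hξ
    apply Set.Finite.subset (Set.finite_Icc (N - m) 0)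
    intro n hn
    simp only [Function.mem_support] at hn
    by_cases hle : n ≤ 0
    · simp only [hle, if_true] at hn
      have : ¬ (m + n < N) := fun hc => hn (hN _ hc)
      exact Set.mem_Icc.mpr ⟨by omega, hle⟩
    · simp [hle] at hn
  upz := fun n hn => by simp [not_le.mpr hn]

/-- The rooted subtree `S₁ = S₁^{(n)} ⊆ T_q` with root `a₁ = (0,-n)`. -/
def S1 (q : ℕ) (n : ℕ) : Set (TV q) :=
  {x | -(n : ℤ) ≤ x.k ∧ x.k ≤ (n : ℤ) ∧ pred^[(x.k + (n : ℤ)).toNat] x = rootAt q (-(n : ℤ))}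

/-- The set of leaves `∂*S₁` of `S₁^{(n)}`. -/
def S1leaves (q : ℕ) (n : ℕ) : Set (TV q) := {x | x ∈ S1 q n ∧ x.k = (n : ℤ)}

/-- The boundary `∂S₁ = {a₁} ∪ ∂*S₁` of `S₁^{(n)}`. -/
def S1bd (q : ℕ) (n : ℕ) : Set (TV q) := insert (rootAt q (-(n : ℤ))) (S1leaves q n)

/-- The horocyclic product `S = S^{(n)}` of `S₁` and `S₂` inside `DL(q,r)`. -/
def Sdl (q r : ℕ) (n : ℕ) : Set (DL q r) := {x | x.val.1 ∈ S1 q n ∧ x.val.2 ∈ S1 r n}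

/-- The boundary `∂S = (∂*S₁ × {a₂}) ∪ ({a₁} × ∂*S₂)` of `S^{(n)}`. -/
def Sbd (q r : ℕ) (n : ℕ) : Set (DL q r) :=
  {x | (x.val.1 ∈ S1leaves q n ∧ x.val.2 = rootAt r (-(n : ℤ))) ∨
       (x.val.1 = rootAt q (-(n : ℤ)) ∧ x.val.2 ∈ S1leaves r n)}

/-- A leaf `y₁ ∈ ∂*S₁` together with `a₂` gives a vertex `y₁a₂` of `DL(q,r)`. -/
def liftLeaf1 (q r : ℕ) (n : ℕ) (y : TV q) (hy : y ∈ S1leaves q n) : DL q r :=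
  ⟨(y, rootAt r (-(n : ℤ))), by have h2 := hy.2; show y.k + (-(n : ℤ)) = 0; omega⟩

/-- The vertex `a₁y₂` of `DL(q,r)` for a leaf `y₂ ∈ ∂*S₂`. -/
def liftLeaf2 (q r : ℕ) (n : ℕ) (y : TV r) (hy : y ∈ S1leaves r n) : DL q r :=
  ⟨(rootAt q (-(n : ℤ)), y), by have h2 := hy.2; show (-(n : ℤ)) + y.k = 0; omega⟩



/-- Elements of the lamplighter group `Γ = ℤ_q ≀ ℤ`: pairs `(η,k)` with `η`
finitely supported. -/
structure LP (q : ℕ) where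
  η : ℤ → ZMod q
  k : ℤ
  fin : (Function.support η).Finite

/-- The identity element `e = (0,0)` of `ℤ_q ≀ ℤ`. -/
def eLP (q : ℕ) : LP q := ⟨fun _ => 0, 0, by simp⟩

/-- Multiplication in `ℤ_q ≀ ℤ`: `(η,k)(η',k') = (η + η'(· − k), k + k')`. -/
def lmul {q : ℕ} (g h : LP q) : LP q where
  η := fun n => g.η n + h.η (n - g.k)
  k := g.k + h.k
  fin := by
    have hinj : Function.Injective (fun n : ℤ => n - g.k) := sub_left_injective
    apply Set.Finite.subset (Set.Finite.union g.fin (h.fin.preimage hinj.injOn))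
    intro n hn
    simp only [Function.mem_support] at hn
    by_cases h1 : g.η n = 0
    · right
      simp only [Set.mem_preimage, Function.mem_support]
      intro h2
      exact hn (by rw [h1, h2, add_zero])
    · left; exact h1

/-- The configuration `δ_j^ℓ` with value `ℓ` at `j` and `0` elsewhere. -/
def deltaCfg (q : ℕ) (j : ℤ) (ℓ : ZMod q) : ℤ → ZMod q := fun n => if n = j then ℓ else 0

/-- The group element `(δ_j^ℓ, k) ∈ ℤ_q ≀ ℤ`. -/
def deltaLP (q : ℕ) (j : ℤ) (ℓ : ZMod q) (k : ℤ) : LP q :=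
  ⟨deltaCfg q j ℓ, k, by
    apply Set.Finite.subset (Set.finite_singleton j)
    intro n hn
    simp only [Function.mem_support, deltaCfg] at hn
    by_cases h : n = j
    · simpa using h
    · simp [h] at hn⟩


/-- Adjacency in the tree `T_q`: one vertex is the predecessor of the other. -/
def adjT {q : ℕ} (x y : TV q) : Prop := pred x = y ∨ pred y = x

/-- Adjacency in `DL(q,r)`. -/
def adjDL {q r : ℕ} (x y : DL q r) : Prop :=
  adjT x.val.1 y.val.1 ∧ adjT x.val.2 y.val.2

/-- The identification `Φ : ℤ_q ≀ ℤ → DL(q,q)`, `Φ(η,k) = (η_k⁻,k)(η_k⁺,-k)`. -/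
def Phi (q : ℕ) (g : LP q) : DL q q :=
  ⟨(⟨fun n => if n ≤ 0 then g.η (g.k + n) else 0, g.k,
      fin_aux g.η g.fin (fun n => g.k + n) (add_right_injective g.k),
      fun n hn => by simp [not_le.mpr hn]⟩,
    ⟨fun n => if n ≤ 0 then g.η (g.k + 1 - n) else 0, -g.k,
      fin_aux g.η g.fin (fun n => g.k + 1 - n) sub_right_injective,
      fun n hn => by simp [not_le.mpr hn]⟩),
   by show g.k + -g.k = 0; omega⟩

/-- The transition matrix `Q_α` of the switch–walk–switch walk on `DL^s(q,r)`. -/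
def qDL (q r : ℕ) (α : ℝ) (x y : DL q r) : ℝ :=
  if pred (pred y.val.1) = pred x.val.1 ∧ y.val.2 = pred x.val.2 then α / ((q : ℝ) ^ 2)
  else if pred y.val.1 = pred (pred x.val.1) ∧ pred y.val.2 = x.val.2 then
    (1 - α) / ((q : ℝ) * (r : ℝ))
  else 0

/-- The horocyclic product `D'` of `T_q` and `T_r` at level sum `-1`. -/
def DL' (q r : ℕ) := {x : TV q × TV r // x.1.k + x.2.k = -1}

/-- The transition matrix `P'` on `D'` (same rule as `P_α`). -/
def pDL' (q r : ℕ) (α : ℝ) (x y : DL' q r) : ℝ :=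
  if pred y.val.1 = x.val.1 ∧ y.val.2 = pred x.val.2 then α / (q : ℝ)
  else if y.val.1 = pred x.val.1 ∧ pred y.val.2 = x.val.2 then (1 - α) / (r : ℝ)
  else 0

/-- The map `x₁x₂ ↦ x₁⁻x₂` from `DL^s(q,r)` onto `D'`. -/
def toDL' {q r : ℕ} (x : DL q r) : DL' q r :=
  ⟨(pred x.val.1, x.val.2), by
    have h := x.property; show x.val.1.k - 1 + x.val.2.k = -1; omega⟩

/-- Harmonicity for the simple ("walk forward and switch, or switch and walk
backward") lamplighter walk on `ℤ_q ≀ ℤ`, whose law is uniform on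
`{(δ₁^ℓ,1), (δ₀^ℓ,-1) : ℓ ∈ ZMod q}`. -/
def SRWHarmonic (q : ℕ) [NeZero q] (h : LP q → ℝ) : Prop :=
  ∀ g : LP q,
    (∑ ℓ : ZMod q, (h (lmul g (deltaLP q 1 ℓ 1)) + h (lmul g (deltaLP q 0 ℓ (-1)))))
      / (2 * (q : ℝ)) = h g

/-- The step `(δ₀^ℓ + δ₁^m, 1)` of the switch–walk–switch walk. -/
def swsStepP (q : ℕ) (ℓ m : ZMod q) : LP q :=
  ⟨fun n => if n = 0 then ℓ else if n = 1 then m else 0, 1, by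
    apply Set.Finite.subset ((Set.finite_singleton 1).insert (0:ℤ))
    intro n hn
    simp only [Function.mem_support] at hn
    by_cases h0 : n = 0
    · simp [h0]
    · by_cases h1 : n = 1
      · simp [h1]
      · simp [h0, h1] at hn⟩

/-- The step `(δ₀^ℓ + δ_{-1}^m, -1)` of the switch–walk–switch walk. -/
def swsStepM (q : ℕ) (ℓ m : ZMod q) : LP q :=
  ⟨fun n => if n = 0 then ℓ else if n = -1 then m else 0, -1, by
    apply Set.Finite.subset ((Set.finite_singleton (-1:ℤ)).insert (0:ℤ))
    intro n hn
    simp only [Function.mem_support] at hn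
    by_cases h0 : n = 0
    · simp [h0]
    · by_cases h1 : n = (-1 : ℤ)
      · simp [h1]
      · simp [h0, h1] at hn⟩

/-- Harmonicity for the switch–walk–switch lamplighter walk on `ℤ_q ≀ ℤ`, whose law
is uniform on `{(δ₀^ℓ + δ₁^m, 1), (δ₀^ℓ + δ_{-1}^m, -1) : ℓ, m ∈ ZMod q}`. -/
def SWSHarmonic (q : ℕ) [NeZero q] (h : LP q → ℝ) : Prop :=
  ∀ g : LP q,
    (∑ ℓ : ZMod q, ∑ m : ZMod q,
        (h (lmul g (swsStepP q ℓ m)) + h (lmul g (swsStepM q ℓ m))))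
      / (2 * (q : ℝ) ^ 2) = h g

/-- The positive defect `df⁺((η,k),ξ₁)`. -/
def dfPlus (q : ℕ) (g : LP q) (ξ : ℤ → ZMod q) : ℤ :=
  sInf ({n : ℤ | n ≤ g.k ∧ ξ (n + 1) ≠ g.η (n + 1)} ∪ {g.k}) -
    sInf ({m : ℤ | m ≤ 0 ∧ ξ (m + 1) ≠ 0} ∪ {0})

/-- The negative defect `df⁻((η,k),ξ₂)`. -/
def dfMinus (q : ℕ) (g : LP q) (ξ : ℤ → ZMod q) : ℤ :=
  sSup ({m : ℤ | 0 < m ∧ ξ m ≠ 0} ∪ {0}) -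
    sSup ({n : ℤ | g.k < n ∧ ξ n ≠ g.η n} ∪ {g.k})

/-- The defect `df⊕((η,k),ξ₁)` for the switch–walk–switch walk. -/
def dfOPlus (q : ℕ) (g : LP q) (ξ : ℤ → ZMod q) : ℤ :=
  sInf ({n : ℤ | n ≤ g.k ∧ ξ n ≠ g.η n} ∪ {g.k}) -
    sInf ({m : ℤ | m ≤ 0 ∧ ξ m ≠ 0} ∪ {0})

/-! `Φ(η,k)` stores the lamps at positions `≤ k` in the first tree and those at positions `> k`,
read backwards, in the second, so the two coordinates together determine `(η,k)` and every
pair arises. An edge of `DL(q,q)` goes down in one tree and up in the other. Going down in the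
first tree from `Φ(η,k)` forgets the lamp at `k`, and going up in the second tree lets a new lamp
at `k` be chosen, so such an edge is exactly a right multiplication by some `(δ₀^ℓ, -1)`; the
edges in the other direction are the right multiplications by `(δ₁^ℓ, 1)`. -/

attribute [ext] TV LP

section Tree

variable {q : ℕ}

lemma TV.eq_iff {x y : TV q} : x = y ↔ x.k = y.k ∧ ∀ n ≤ 0, x.σ n = y.σ n := by
  refine ⟨fun h => h ▸ ⟨rfl, fun _ _ => rfl⟩, fun ⟨hk, hσ⟩ => TV.ext ?_ hk⟩
  funext n
  by_cases hn : n ≤ 0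
  · exact hσ n hn
  · rw [x.upz n (by omega), y.upz n (by omega)]

@[simp]
lemma pred_k (x : TV q) : (pred x).k = x.k - 1 := rfl

lemma pred_σ (x : TV q) {n : ℤ} (hn : n ≤ 0) : (pred x).σ n = x.σ (n - 1) := if_pos hn

end Tree

lemma adjDL_iff {q r : ℕ} {x y : DL q r} :
    adjDL x y ↔ (pred x.val.1 = y.val.1 ∧ pred y.val.2 = x.val.2) ∨
      (pred y.val.1 = x.val.1 ∧ pred x.val.2 = y.val.2) := by
  have hx := x.property
  have hy := y.property
  have level {q : ℕ} {a b : TV q} (h : pred a = b) : b.k = a.k - 1 := by rw [← h, pred_k]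
  constructor
  · rintro ⟨h₁ | h₁, h₂ | h₂⟩
    · have := level h₁; have := level h₂; omega
    · exact Or.inl ⟨h₁, h₂⟩
    · exact Or.inr ⟨h₁, h₂⟩
    · have := level h₁; have := level h₂; omega
  · rintro (⟨h₁, h₂⟩ | ⟨h₁, h₂⟩)
    · exact ⟨Or.inl h₁, Or.inr h₂⟩
    · exact ⟨Or.inr h₁, Or.inl h₂⟩

section Phi

variable {q : ℕ}

@[simp]
lemma Phi_fst_k (g : LP q) : (Phi q g).val.1.k = g.k := rfl

@[simp]
lemma Phi_snd_k (g : LP q) : (Phi q g).val.2.k = -g.k := rfl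

lemma Phi_fst_σ (g : LP q) {n : ℤ} (hn : n ≤ 0) : (Phi q g).val.1.σ n = g.η (g.k + n) :=
  if_pos hn

lemma Phi_snd_σ (g : LP q) {n : ℤ} (hn : n ≤ 0) :
    (Phi q g).val.2.σ n = g.η (g.k + 1 - n) :=
  if_pos hn

def PhiInv (q : ℕ) (x : DL q q) : LP q where
  η m := if m ≤ x.val.1.k then x.val.1.σ (m - x.val.1.k) else x.val.2.σ (x.val.1.k + 1 - m)
  k := x.val.1.k
  fin := by
    refine ((x.val.1.fin.image (· + x.val.1.k)).union
      (x.val.2.fin.image (x.val.1.k + 1 - ·))).subset fun m hm => ?_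
    by_cases hle : m ≤ x.val.1.k
    · exact Or.inl ⟨m - x.val.1.k, by simpa [hle] using hm, by ring⟩
    · exact Or.inr ⟨x.val.1.k + 1 - m, by simpa [hle] using hm, by ring⟩

lemma PhiInv_Phi (g : LP q) : PhiInv q (Phi q g) = g := by
  ext m
  · by_cases hm : m ≤ g.k
    · simp [PhiInv, hm, Phi_fst_σ g (show m - g.k ≤ 0 by omega)]
    · simp [PhiInv, hm, Phi_snd_σ g (show g.k + 1 - m ≤ 0 by omega)]
  · rfl

lemma Phi_PhiInv (x : DL q q) : Phi q (PhiInv q x) = x := by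
  have hx := x.property
  refine Subtype.ext (Prod.ext (TV.eq_iff.2 ⟨rfl, fun n hn => ?_⟩)
    (TV.eq_iff.2 ⟨show -x.val.1.k = x.val.2.k by omega, fun n hn => ?_⟩))
  · rw [Phi_fst_σ _ hn]
    simp [PhiInv, hn]
  · rw [Phi_snd_σ _ hn]
    simp [PhiInv, show ¬ x.val.1.k + 1 - n ≤ x.val.1.k by omega]

lemma Phi_bijective : Function.Bijective (Phi q) :=
  Function.bijective_iff_has_inverse.2 ⟨PhiInv q, PhiInv_Phi, Phi_PhiInv⟩

lemma pred_Phi_fst_eq_iff (g h : LP q) :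
    pred (Phi q g).val.1 = (Phi q h).val.1 ↔ h.k = g.k - 1 ∧ ∀ m ≤ h.k, h.η m = g.η m := by
  rw [TV.eq_iff, pred_k, Phi_fst_k, Phi_fst_k, eq_comm]
  refine and_congr_right fun hk => ⟨fun H m hm => ?_, fun H n hn => ?_⟩
  · have := H (m - h.k) (by omega)
    rwa [pred_σ _ (by omega), Phi_fst_σ _ (by omega), Phi_fst_σ _ (by omega),
      show g.k + (m - h.k - 1) = m by omega, add_sub_cancel, eq_comm] at this
  · rw [pred_σ _ hn, Phi_fst_σ _ (by omega), Phi_fst_σ _ hn,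
      show g.k + (n - 1) = h.k + n by omega, H _ (by omega)]

lemma pred_Phi_snd_eq_iff (g h : LP q) :
    pred (Phi q g).val.2 = (Phi q h).val.2 ↔
      g.k = h.k - 1 ∧ ∀ m, h.k < m → h.η m = g.η m := by
  rw [TV.eq_iff, pred_k, Phi_snd_k, Phi_snd_k, show -g.k - 1 = -h.k ↔ g.k = h.k - 1 by omega]
  refine and_congr_right fun hk => ⟨fun H m hm => ?_, fun H n hn => ?_⟩
  · have := H (h.k + 1 - m) (by omega)
    rwa [pred_σ _ (by omega), Phi_snd_σ _ (by omega), Phi_snd_σ _ (by omega),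
      show g.k + 1 - (h.k + 1 - m - 1) = m by omega, sub_sub_cancel, eq_comm] at this
  · rw [pred_σ _ hn, Phi_snd_σ _ (by omega), Phi_snd_σ _ hn,
      show g.k + 1 - (n - 1) = h.k + 1 - n by omega, H _ (by omega)]

lemma pred_Phi_fst_eq_and_pred_Phi_snd_eq_iff (g h : LP q) :
    pred (Phi q g).val.1 = (Phi q h).val.1 ∧ pred (Phi q h).val.2 = (Phi q g).val.2 ↔
      h.k = g.k - 1 ∧ ∀ m ≠ g.k, h.η m = g.η m := by
  rw [pred_Phi_fst_eq_iff, pred_Phi_snd_eq_iff]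
  constructor
  · rintro ⟨⟨hk, below⟩, -, above⟩
    refine ⟨hk, fun m hm => ?_⟩
    rcases lt_or_gt_of_ne hm with hlt | hgt
    · exact below m (by omega)
    · exact (above m hgt).symm
  · rintro ⟨hk, H⟩
    exact ⟨⟨hk, fun m hm => H m (by omega)⟩, hk, fun m hm => (H m (by omega)).symm⟩

end Phi

lemma exists_eq_lmul_deltaLP_iff {q : ℕ} (g h : LP q) (j k : ℤ) :
    (∃ ℓ : ZMod q, h = lmul g (deltaLP q j ℓ k)) ↔
      h.k = g.k + k ∧ ∀ m ≠ g.k + j, h.η m = g.η m := by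
  constructor
  · rintro ⟨ℓ, rfl⟩
    exact ⟨rfl, fun m hm => by simp [lmul, deltaLP, deltaCfg, show m - g.k ≠ j by omega]⟩
  · rintro ⟨hk, H⟩
    refine ⟨h.η (g.k + j) - g.η (g.k + j), LP.ext (funext fun m => ?_) hk⟩
    by_cases hm : m = g.k + j
    · simp [lmul, deltaLP, deltaCfg, hm]
    · simp [lmul, deltaLP, deltaCfg, H m hm, show m - g.k ≠ j by omega]

theorem cayley_lamplighter_general (q : ℕ) :
    Function.Bijective (Phi q) ∧
    ∀ g h : LP q, adjDL (Phi q g) (Phi q h) ↔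
      ∃ ℓ : ZMod q, h = lmul g (deltaLP q 1 ℓ 1) ∨ h = lmul g (deltaLP q 0 ℓ (-1)) := by
  refine ⟨Phi_bijective, fun g h => ?_⟩
  rw [adjDL_iff, pred_Phi_fst_eq_and_pred_Phi_snd_eq_iff,
    pred_Phi_fst_eq_and_pred_Phi_snd_eq_iff h g, exists_or, exists_eq_lmul_deltaLP_iff,
    exists_eq_lmul_deltaLP_iff, add_zero, ← sub_eq_add_neg, or_comm]
  refine or_congr ⟨?_, ?_⟩ Iff.rfl <;>
    exact fun ⟨hk, H⟩ => ⟨by omega, fun m hm => (H m (by omega)).symm⟩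

/-- `DL(q,q)` is a Cayley graph of the lamplighter group `ℤ_q ≀ ℤ`. -/
theorem cayley_lamplighter (q : ℕ) (hq : 2 ≤ q) :
    Function.Bijective (Phi q) ∧
    ∀ g h : LP q, adjDL (Phi q g) (Phi q h) ↔
      ∃ ℓ : ZMod q, h = lmul g (deltaLP q 1 ℓ 1) ∨ h = lmul g (deltaLP q 0 ℓ (-1)) :=
  cayley_lamplighter_general q

end LampDL
end
end

section
/- Let q, r ≥ 2, 0 < α < 1 and n ≥ 1, with S = S^{(n)} ⊆ DL(q,r) and S₁, S₂, ∂*S₁, ∂*S₂, ∂S₁, ∂S₂, a₁, a₂ as in the context. Then for all x₁x₂ ∈ S: F^{∂S}(x₁x₂, y₁a₂) = F₁^{∂S₁}(x₁, y₁) for every y₁ ∈ ∂*S₁, and F^{∂S}(x₁x₂, a₁y₂) = F₂^{∂S₂}(x₂, y₂) for every y₂ ∈ ∂*S₂; here F^{∂S} refers to the chain P_α on DL(q,r), F₁^{∂S₁} to the chain P₁ on T_q, and F₂^{∂S₂} to the chain P₂ on T_r. -/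
open scoped Classical

noncomputable section

namespace LampDL

variable {X : Type*}

/-
The first coordinate of the walk `P_α` on `DL(q,r)` is itself a Markov chain with transition
matrix `P₁`, and inside `S^{(n)}` the boundary `∂S` and the target `y₁a₂` are detected by the
first coordinate alone, since a vertex of `S^{(n)}` whose first coordinate is a leaf or `a₁` has
second coordinate `a₂` or a leaf by the level constraint. So the chain on `S^{(n)}` stopped at
`∂S` lumps onto the chain on `S₁` stopped at `∂S₁`, and the path-length decomposition of `F^{∂S}`
is carried term by term to that of `F₁^{∂S₁}`. The same holds for the second coordinate.
-/

section Lumping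

variable {X Y : Type*} {p : X → X → ℝ} {p' : Y → Y → ℝ} {π : X → Y}
  {S A : Set X} {B : Set Y} {y : X}

lemma hitBefore_eq_hitBefore_comp (hA : ∀ x ∈ S, x ∈ A ↔ π x ∈ B)
    (hy : ∀ x ∈ S, π x = π y → x = y)
    (hstay : ∀ x ∈ S, x ∉ A → ∀ z, p x z ≠ 0 → z ∈ S)
    (hproj : ∀ x ∈ S, x ∉ A → ∀ g : Y → ℝ, ∑' z, p x z * g (π z) = ∑' w, p' (π x) w * g w)
    (m : ℕ) : ∀ x ∈ S, hitBefore p A y m x = hitBefore p' B (π y) m (π x) := by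
  induction m with
  | zero =>
    intro x hx
    exact if_congr ⟨congrArg π, hy x hx⟩ rfl rfl
  | succ m ih =>
    intro x hx
    show (if x ∈ A then (0 : ℝ) else _) = (if π x ∈ B then (0 : ℝ) else _)
    by_cases hxA : x ∈ A
    · rw [if_pos hxA, if_pos ((hA x hx).mp hxA)]
    · rw [if_neg hxA, if_neg (fun h => hxA ((hA x hx).mpr h)), ← hproj x hx hxA]
      refine tsum_congr fun z => ?_
      by_cases hz : p x z = 0
      · simp [hz]
      · rw [ih z (hstay x hx hxA z hz)]

lemma FA_eq_FA_comp (hA : ∀ x ∈ S, x ∈ A ↔ π x ∈ B)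
    (hy : ∀ x ∈ S, π x = π y → x = y)
    (hstay : ∀ x ∈ S, x ∉ A → ∀ z, p x z ≠ 0 → z ∈ S)
    (hproj : ∀ x ∈ S, x ∉ A → ∀ g : Y → ℝ, ∑' z, p x z * g (π z) = ∑' w, p' (π x) w * g w)
    {x : X} (hx : x ∈ S) : FA p A x y = FA p' B (π x) (π y) :=
  tsum_congr fun m => hitBefore_eq_hitBefore_comp hA hy hstay hproj m x hx

end Lumping

attribute [ext] TV

section Tree

variable {q : ℕ}

lemma TV.ne_of_k_ne {x y : TV q} (h : x.k ≠ y.k) : x ≠ y :=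
  fun e => h (congrArg TV.k e)

def succ (x : TV q) (ℓ : ZMod q) : TV q where
  σ := fun n => if n = 0 then ℓ else if n < 0 then x.σ (n + 1) else 0
  k := x.k + 1
  fin := by
    refine ((x.fin.preimage (add_left_injective (1 : ℤ)).injOn).insert 0).subset fun n hn => ?_
    simp only [Function.mem_support] at hn
    by_cases h0 : n = 0
    · exact Or.inl h0
    · by_cases hneg : n < 0
      · exact Or.inr fun hz => hn (by simp [h0, hneg, hz])
      · simp [h0, hneg] at hn
  upz := fun n hn => by simp [show n ≠ 0 by omega, show ¬n < 0 by omega]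

@[simp] lemma succ_k (x : TV q) (ℓ : ZMod q) : (succ x ℓ).k = x.k + 1 := rfl

@[simp] lemma pred_succ (x : TV q) (ℓ : ZMod q) : pred (succ x ℓ) = x := by
  ext n
  · show (if n ≤ 0 then (succ x ℓ).σ (n - 1) else 0) = x.σ n
    by_cases hn : n ≤ 0
    · simp [succ, hn, show n - 1 ≠ 0 by omega, show n - 1 < 0 by omega]
    · rw [if_neg hn, x.upz n (by omega)]
  · simp

lemma succ_injective (x : TV q) : Function.Injective (succ x) :=
  fun ℓ ℓ' h => by simpa [succ] using congrArg (fun z => z.σ 0) h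

lemma eq_succ_of_pred_eq {x y : TV q} (h : pred y = x) : y = succ x (y.σ 0) := by
  subst h
  ext n
  · show y.σ n = if n = 0 then y.σ 0 else if n < 0 then (if n + 1 ≤ 0 then y.σ (n + 1 - 1) else 0)
      else 0
    by_cases h0 : n = 0
    · simp [h0]
    · by_cases hneg : n < 0
      · simp [h0, hneg, show n + 1 ≤ 0 by omega]
      · simp [h0, hneg, y.upz n (by omega)]
  · simp

lemma succ_ne_pred (x : TV q) (ℓ : ZMod q) : succ x ℓ ≠ pred x :=
  TV.ne_of_k_ne (by simp only [succ_k, pred_k]; omega)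

lemma tsum_mul_eq_sum_succ_add_pred [NeZero q] {P : TV q → ℝ} (x : TV q)
    (hP : ∀ z, z ≠ pred x → pred z ≠ x → P z = 0) (f : TV q → ℝ) :
    ∑' z, P z * f z = (∑ ℓ : ZMod q, P (succ x ℓ) * f (succ x ℓ)) + P (pred x) * f (pred x) := by
  have hpred : pred x ∉ Finset.univ.image (succ x) := by
    simpa using fun ℓ => succ_ne_pred x ℓ
  rw [tsum_eq_sum (s := insert (pred x) (Finset.univ.image (succ x))) fun z hz => ?_,
    Finset.sum_insert hpred, Finset.sum_image fun a _ b _ h => succ_injective x h, add_comm]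
  simp only [Finset.mem_insert, Finset.mem_image, Finset.mem_univ, true_and, not_or,
    not_exists] at hz
  rw [hP z hz.1 fun h => hz.2 _ (eq_succ_of_pred_eq h).symm, zero_mul]

lemma tsum_p1_mul [NeZero q] (α : ℝ) (x : TV q) (f : TV q → ℝ) :
    ∑' z, p1 q α x z * f z
      = (∑ ℓ : ZMod q, α / (q : ℝ) * f (succ x ℓ)) + (1 - α) * f (pred x) := by
  rw [tsum_mul_eq_sum_succ_add_pred x fun z h₁ h₂ => by simp [p1, h₁, h₂]]
  simp [p1, TV.ne_of_k_ne (show (pred (pred x)).k ≠ x.k by simp only [pred_k]; omega)]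

lemma tsum_p2_mul {r : ℕ} [NeZero r] (α : ℝ) (x : TV r) (f : TV r → ℝ) :
    ∑' z, p2 r α x z * f z
      = α * f (pred x) + (∑ m : ZMod r, (1 - α) / (r : ℝ) * f (succ x m)) := by
  rw [tsum_mul_eq_sum_succ_add_pred x fun z h₁ h₂ => by simp [p2, h₁, h₂], add_comm]
  simp [p2, succ_ne_pred]

end Tree

section Subtree

variable {q : ℕ} {n : ℕ} {x : TV q}

lemma eq_rootAt_of_mem_S1 (hx : x ∈ S1 q n) (hk : x.k = -(n : ℤ)) :
    x = rootAt q (-(n : ℤ)) := by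
  have h := hx.2.2
  rwa [show (x.k + (n : ℤ)).toNat = 0 by omega, Function.iterate_zero_apply] at h

lemma succ_mem_S1 (hx : x ∈ S1 q n) (hk : x.k < n) (ℓ : ZMod q) : succ x ℓ ∈ S1 q n := by
  obtain ⟨h₁, h₂, h₃⟩ := hx
  refine ⟨by rw [succ_k]; omega, by rw [succ_k]; omega, ?_⟩
  rwa [succ_k, show (x.k + 1 + (n : ℤ)).toNat = (x.k + (n : ℤ)).toNat + 1 by omega,
    Function.iterate_succ_apply, pred_succ]

lemma pred_mem_S1 (hx : x ∈ S1 q n) (hk : -(n : ℤ) < x.k) : pred x ∈ S1 q n := by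
  obtain ⟨h₁, h₂, h₃⟩ := hx
  refine ⟨by rw [pred_k]; omega, by rw [pred_k]; omega, ?_⟩
  rwa [show (x.k + (n : ℤ)).toNat = ((pred x).k + (n : ℤ)).toNat + 1 by rw [pred_k]; omega,
    Function.iterate_succ_apply] at h₃

lemma k_mem_Ioo_of_mem_S1_of_notMem_S1bd (hx : x ∈ S1 q n) (hb : x ∉ S1bd q n) :
    -(n : ℤ) < x.k ∧ x.k < n :=
  ⟨lt_of_le_of_ne hx.1 fun he => hb (Or.inl (eq_rootAt_of_mem_S1 hx he.symm)),
    lt_of_le_of_ne hx.2.1 fun he => hb (Or.inr ⟨hx, he⟩)⟩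

end Subtree

section Horocyclic

variable {q r : ℕ}

def upDL (x : DL q r) (ℓ : ZMod q) : DL q r :=
  ⟨(succ x.val.1 ℓ, pred x.val.2), by have := x.property; simp only [succ_k, pred_k]; omega⟩

def downDL (x : DL q r) (m : ZMod r) : DL q r :=
  ⟨(pred x.val.1, succ x.val.2 m), by have := x.property; simp only [succ_k, pred_k]; omega⟩

lemma upDL_injective (x : DL q r) : Function.Injective (upDL x) :=
  fun _ _ h => succ_injective _ (congrArg (fun w => w.val.1) h)

lemma downDL_injective (x : DL q r) : Function.Injective (downDL x) :=
  fun _ _ h => succ_injective _ (congrArg (fun w => w.val.2) h)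

lemma upDL_ne_downDL (x : DL q r) (ℓ : ZMod q) (m : ZMod r) :
    upDL x ℓ ≠ downDL x m :=
  fun h => TV.ne_of_k_ne
    (show (succ x.val.1 ℓ).k ≠ (pred x.val.1).k by simp only [succ_k, pred_k]; omega)
    (congrArg (fun w => w.val.1) h)

lemma pDL_upDL (α : ℝ) (x : DL q r) (ℓ : ZMod q) :
    pDL q r α x (upDL x ℓ) = α / q := by
  simp [pDL, upDL]

lemma pDL_downDL (α : ℝ) (x : DL q r) (m : ZMod r) :
    pDL q r α x (downDL x m) = (1 - α) / r := by
  have : pred (pred x.val.1) ≠ x.val.1 := TV.ne_of_k_ne (by simp only [pred_k]; omega)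
  simp [pDL, downDL, this]

lemma exists_upDL_or_downDL_of_pDL_ne_zero {α : ℝ} {x z : DL q r}
    (h : pDL q r α x z ≠ 0) : (∃ ℓ, upDL x ℓ = z) ∨ ∃ m, downDL x m = z := by
  unfold pDL at h
  split_ifs at h with hup hdown
  · exact Or.inl ⟨z.val.1.σ 0, Subtype.ext (Prod.ext (eq_succ_of_pred_eq hup.1).symm hup.2.symm)⟩
  · exact Or.inr ⟨z.val.2.σ 0,
      Subtype.ext (Prod.ext hdown.1.symm (eq_succ_of_pred_eq hdown.2).symm)⟩
  · exact absurd rfl h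

lemma tsum_pDL_mul [NeZero q] [NeZero r] (α : ℝ) (x : DL q r) (f : DL q r → ℝ) :
    ∑' z, pDL q r α x z * f z
      = (∑ ℓ : ZMod q, α / (q : ℝ) * f (upDL x ℓ))
        + (∑ m : ZMod r, (1 - α) / (r : ℝ) * f (downDL x m)) := by
  have hdisj : Disjoint (Finset.univ.image (upDL x)) (Finset.univ.image (downDL x)) := by
    simpa [Finset.disjoint_left] using fun ℓ m => (upDL_ne_downDL x ℓ m).symm
  rw [tsum_eq_sum (s := Finset.univ.image (upDL x) ∪ Finset.univ.image (downDL x))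
      fun z hz => ?_, Finset.sum_union hdisj, Finset.sum_image fun a _ b _ h => upDL_injective x h,
    Finset.sum_image fun a _ b _ h => downDL_injective x h]
  · simp only [pDL_upDL, pDL_downDL]
  · by_contra hne
    rcases exists_upDL_or_downDL_of_pDL_ne_zero (left_ne_zero_of_mul hne) with ⟨ℓ, rfl⟩ | ⟨m, rfl⟩
      <;> simp at hz

lemma tsum_pDL_mul_fst [NeZero q] [NeZero r] (α : ℝ) (x : DL q r) (g : TV q → ℝ) :
    ∑' z, pDL q r α x z * g z.val.1 = ∑' w, p1 q α x.val.1 w * g w := by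
  have hr : (r : ℝ) ≠ 0 := Nat.cast_ne_zero.mpr (NeZero.ne r)
  rw [tsum_pDL_mul, tsum_p1_mul]
  simp only [upDL, downDL, Finset.sum_const, Finset.card_univ, ZMod.card, nsmul_eq_mul]
  field_simp

lemma tsum_pDL_mul_snd [NeZero q] [NeZero r] (α : ℝ) (x : DL q r) (g : TV r → ℝ) :
    ∑' z, pDL q r α x z * g z.val.2 = ∑' w, p2 r α x.val.2 w * g w := by
  have hq : (q : ℝ) ≠ 0 := Nat.cast_ne_zero.mpr (NeZero.ne q)
  rw [tsum_pDL_mul, tsum_p2_mul]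
  simp only [upDL, downDL, Finset.sum_const, Finset.card_univ, ZMod.card, nsmul_eq_mul]
  field_simp

variable {n : ℕ} {x : DL q r}

lemma mem_Sbd_iff_fst (hx : x ∈ Sdl q r n) : x ∈ Sbd q r n ↔ x.val.1 ∈ S1bd q n := by
  have hsum := x.property
  constructor
  · rintro (⟨h, -⟩ | ⟨h, -⟩)
    · exact Or.inr h
    · exact Or.inl h
  · rintro (h | h)
    · have : x.val.1.k = -(n : ℤ) := by rw [h]; rfl
      exact Or.inr ⟨h, hx.2, by omega⟩
    · exact Or.inl ⟨h, eq_rootAt_of_mem_S1 hx.2 (by have := h.2; omega)⟩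

lemma mem_Sbd_iff_snd (hx : x ∈ Sdl q r n) : x ∈ Sbd q r n ↔ x.val.2 ∈ S1bd r n := by
  have hsum := x.property
  constructor
  · rintro (⟨-, h⟩ | ⟨-, h⟩)
    · exact Or.inl h
    · exact Or.inr h
  · rintro (h | h)
    · have : x.val.2.k = -(n : ℤ) := by rw [h]; rfl
      exact Or.inl ⟨⟨hx.1, by omega⟩, h⟩
    · exact Or.inr ⟨eq_rootAt_of_mem_S1 hx.1 (by have := h.2; omega), h⟩

lemma eq_of_fst_eq_of_mem_S1leaves {y : DL q r} (hx : x ∈ Sdl q r n)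
    (hy₁ : y.val.1 ∈ S1leaves q n) (hy₂ : y.val.2 = rootAt r (-(n : ℤ)))
    (h : x.val.1 = y.val.1) : x = y := by
  have hk : x.val.1.k = n := h ▸ hy₁.2
  have hx₂ := eq_rootAt_of_mem_S1 hx.2 (by have := x.property; omega)
  exact Subtype.ext (Prod.ext h (hx₂.trans hy₂.symm))

lemma eq_of_snd_eq_of_mem_S1leaves {y : DL q r} (hx : x ∈ Sdl q r n)
    (hy₁ : y.val.1 = rootAt q (-(n : ℤ))) (hy₂ : y.val.2 ∈ S1leaves r n)
    (h : x.val.2 = y.val.2) : x = y := by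
  have hk : x.val.2.k = n := h ▸ hy₂.2
  have hx₁ := eq_rootAt_of_mem_S1 hx.1 (by have := x.property; omega)
  exact Subtype.ext (Prod.ext (hx₁.trans hy₁.symm) h)

lemma mem_Sdl_of_pDL_ne_zero {α : ℝ} (hx : x ∈ Sdl q r n) (hb : x ∉ Sbd q r n) {z : DL q r}
    (hz : pDL q r α x z ≠ 0) : z ∈ Sdl q r n := by
  have hsum := x.property
  have hk := k_mem_Ioo_of_mem_S1_of_notMem_S1bd hx.1 fun h => hb ((mem_Sbd_iff_fst hx).mpr h)
  rcases exists_upDL_or_downDL_of_pDL_ne_zero hz with ⟨ℓ, rfl⟩ | ⟨m, rfl⟩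
  · exact ⟨succ_mem_S1 hx.1 hk.2 ℓ, pred_mem_S1 hx.2 (by omega)⟩
  · exact ⟨pred_mem_S1 hx.1 hk.1, succ_mem_S1 hx.2 (by omega) m⟩

end Horocyclic

theorem hitting_identification_general (q r : ℕ) (hq : 2 ≤ q) (hr : 2 ≤ r) (α : ℝ)
    (n : ℕ) (x : DL q r) (hx : x ∈ Sdl q r n) :
    (∀ y : DL q r, y.val.1 ∈ S1leaves q n → y.val.2 = rootAt r (-(n : ℤ)) →
        FA (pDL q r α) (Sbd q r n) x y = FA (p1 q α) (S1bd q n) x.val.1 y.val.1) ∧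
    (∀ y : DL q r, y.val.1 = rootAt q (-(n : ℤ)) → y.val.2 ∈ S1leaves r n →
        FA (pDL q r α) (Sbd q r n) x y = FA (p2 r α) (S1bd r n) x.val.2 y.val.2) := by
  have : NeZero q := ⟨by omega⟩
  have : NeZero r := ⟨by omega⟩
  refine ⟨fun y hy₁ hy₂ => ?_, fun y hy₁ hy₂ => ?_⟩
  · exact FA_eq_FA_comp (π := fun z : DL q r => z.val.1) (fun _ hz => mem_Sbd_iff_fst hz)
      (fun _ hz => eq_of_fst_eq_of_mem_S1leaves hz hy₁ hy₂)
      (fun _ hz hb _ => mem_Sdl_of_pDL_ne_zero hz hb) (fun z _ _ => tsum_pDL_mul_fst α z) hx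
  · exact FA_eq_FA_comp (π := fun z : DL q r => z.val.2) (fun _ hz => mem_Sbd_iff_snd hz)
      (fun _ hz => eq_of_snd_eq_of_mem_S1leaves hz hy₁ hy₂)
      (fun _ hz hb _ => mem_Sdl_of_pDL_ne_zero hz hb) (fun z _ _ => tsum_pDL_mul_snd α z) hx

/-- hitting probabilities on `S^{(n)}` coincide with the projected
hitting probabilities on the two subtrees. -/
theorem hitting_identification (q r : ℕ) (hq : 2 ≤ q) (hr : 2 ≤ r) (α : ℝ)
    (hα0 : 0 < α) (hα1 : α < 1) (n : ℕ) (hn : 1 ≤ n) (x : DL q r) (hx : x ∈ Sdl q r n) :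
    (∀ y : DL q r, y.val.1 ∈ S1leaves q n → y.val.2 = rootAt r (-(n : ℤ)) →
        FA (pDL q r α) (Sbd q r n) x y = FA (p1 q α) (S1bd q n) x.val.1 y.val.1) ∧
    (∀ y : DL q r, y.val.1 = rootAt q (-(n : ℤ)) → y.val.2 ∈ S1leaves r n →
        FA (pDL q r α) (Sbd q r n) x y = FA (p2 r α) (S1bd r n) x.val.2 y.val.2) :=
  hitting_identification_general q r hq hr α n x hx

end LampDL
end
end

section
/- Let q, r ≥ 2 and 0 < α < 1. Every Q_α-harmonic function h on DL^s(q,r) is constant on each equivalence class of the sibling relation; that is, h(x₁x₂) = h(u₁x₂) whenever x₁⁻ = u₁⁻ and x₁x₂, u₁x₂ ∈ DL^s(q,r). -/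
open scoped Classical

noncomputable section

namespace LampDL

variable {X : Type*}

theorem IsHarmonic.apply_eq_of_row_eq {p : X → X → ℝ} {h : X → ℝ} (hh : IsHarmonic p h)
    {x u : X} (hrow : p x = p u) : h x = h u := by
  rw [← hh x, ← hh u, hrow]

theorem qDL_row_eq_of_sibling {q r : ℕ} (α : ℝ) {x u : DL q r}
    (h₁ : pred x.val.1 = pred u.val.1) (h₂ : x.val.2 = u.val.2) : qDL q r α x = qDL q r α u := by
  funext y
  simp only [qDL, h₁, h₂]

theorem sibling_constant_general (q r : ℕ) (α : ℝ)
    (h : DL q r → ℝ) (hharm : IsHarmonic (qDL q r α) h) :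
    ∀ x u : DL q r, pred x.val.1 = pred u.val.1 → x.val.2 = u.val.2 → h x = h u :=
  fun _ _ h₁ h₂ => hharm.apply_eq_of_row_eq (qDL_row_eq_of_sibling α h₁ h₂)

/-- `Q_α`-harmonic functions on `DL^s(q,r)` are constant on the
equivalence classes of the sibling relation. -/
theorem sibling_constant (q r : ℕ) (hq : 2 ≤ q) (hr : 2 ≤ r) (α : ℝ)
    (hα0 : 0 < α) (hα1 : α < 1) (h : DL q r → ℝ) (hharm : IsHarmonic (qDL q r α) h) :
    ∀ x u : DL q r, pred x.val.1 = pred u.val.1 → x.val.2 = u.val.2 → h x = h u :=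
  sibling_constant_general q r α h hharm

end LampDL
end
end
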